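/- arXiv:2205.05274 — 2 statements merged into one kernel-verified Lean document; each statement's English description precedes it below -/
import Mathlib

section
/- Let G be a connected finite simple graph with at least 3 vertices and let W_n be the wheel graph obtained by joining a single vertex to every vertex of the cycle C_n, where n ≥ 4. Then γ_{P,c}(G □ W_n) ≤ 3·γ_c(G). -/
open SimpleGraph

variable {V : Type*} {α β : Type*}

/-- The monitored set `M(S)`: least set containing the closed neighborhood of `S`
and closed under the propagation rule (a monitored vertex all of whose neighbors,
except possibly one, are monitored forces that remaining neighbor). -/
inductive Monitored (G : SimpleGraph V) (S : Set V) : V → Prop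
  | mem : ∀ {v}, v ∈ S → Monitored G S v
  | dom : ∀ {v w}, v ∈ S → G.Adj v w → Monitored G S w
  | prop : ∀ {v w}, Monitored G S v → G.Adj v w →
      (∀ u, G.Adj v u → u ≠ w → Monitored G S u) → Monitored G S w

/-- `S` is a power dominating set of `G`. -/
def IsPDS (G : SimpleGraph V) (S : Set V) : Prop := ∀ v, Monitored G S v

/-- `S` is a connected power dominating set of `G`. -/
def IsCPDS (G : SimpleGraph V) (S : Set V) : Prop :=
  IsPDS G S ∧ (G.induce S).Connected

/-- The connected power domination number `γ_{P,c}(G)`. -/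
noncomputable def cpdn (G : SimpleGraph V) : ℕ :=
  sInf {n | ∃ S : Finset V, S.card = n ∧ IsCPDS G (S : Set V)}

/-- Zero-forcing: least set containing `Z` closed under the color-change rule. -/
inductive Forced (G : SimpleGraph V) (Z : Set V) : V → Prop
  | mem : ∀ {v}, v ∈ Z → Forced G Z v
  | force : ∀ {v w}, Forced G Z v → G.Adj v w →
      (∀ u, G.Adj v u → u ≠ w → Forced G Z u) → Forced G Z w

/-- `Z` is a zero forcing set of `G`. -/
def IsZFS (G : SimpleGraph V) (Z : Set V) : Prop := ∀ v, Forced G Z v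

/-- `Z` is a connected zero forcing set of `G`. -/
def IsCZFS (G : SimpleGraph V) (Z : Set V) : Prop :=
  IsZFS G Z ∧ (G.induce Z).Connected

/-- The connected zero forcing number `Z_c(G)`. -/
noncomputable def czfn (G : SimpleGraph V) : ℕ :=
  sInf {n | ∃ Z : Finset V, Z.card = n ∧ IsCZFS G (Z : Set V)}

/-- `S` is a dominating set of `G`: `N[S] = V(G)`. -/
def IsDomSet (G : SimpleGraph V) (S : Set V) : Prop :=
  ∀ v, ∃ u ∈ S, u = v ∨ G.Adj u v

/-- `S` is a connected dominating set of `G`. -/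
def IsCDS (G : SimpleGraph V) (S : Set V) : Prop :=
  IsDomSet G S ∧ (G.induce S).Connected

/-- The domination number `γ(G)`. -/
noncomputable def domNum (G : SimpleGraph V) : ℕ :=
  sInf {n | ∃ S : Finset V, S.card = n ∧ IsDomSet G (S : Set V)}

/-- The connected domination number `γ_c(G)`. -/
noncomputable def cdomNum (G : SimpleGraph V) : ℕ :=
  sInf {n | ∃ S : Finset V, S.card = n ∧ IsCDS G (S : Set V)}

/-- The lexicographic product `G ∘ H`. -/
def lexProd (G : SimpleGraph α) (H : SimpleGraph β) : SimpleGraph (α × β) where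
  Adj x y := G.Adj x.1 y.1 ∨ (x.1 = y.1 ∧ H.Adj x.2 y.2)
  symm := ⟨by
    rintro ⟨a, b⟩ ⟨c, d⟩ (h | ⟨h1, h2⟩)
    · exact Or.inl h.symm
    · exact Or.inr ⟨h1.symm, h2.symm⟩⟩
  loopless := ⟨by
    rintro ⟨a, b⟩ (h | ⟨-, h⟩)
    · exact G.loopless.irrefl a h
    · exact H.loopless.irrefl b h⟩

/-- The tensor (direct) product `G × H`. -/
def tensorProd (G : SimpleGraph α) (H : SimpleGraph β) : SimpleGraph (α × β) where
  Adj x y := G.Adj x.1 y.1 ∧ H.Adj x.2 y.2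
  symm := ⟨fun _ _ ⟨h1, h2⟩ => ⟨h1.symm, h2.symm⟩⟩
  loopless := ⟨fun x ⟨h1, _⟩ => G.loopless.irrefl x.1 h1⟩

/-- A vertex `v` is universal in `G`. -/
def IsUniversal (G : SimpleGraph V) (v : V) : Prop := ∀ w, w ≠ v → G.Adj v w

/-- The join of a single vertex (`none`) with the graph `G` (on `some` vertices). -/
def coneGraph (G : SimpleGraph α) : SimpleGraph (Option α) where
  Adj x y := match x, y with
    | none, none => False
    | none, some _ => True
    | some _, none => True
    | some a, some b => G.Adj a b
  symm := ⟨by rintro (_ | a) (_ | b) h <;> first | trivial | exact h.symm⟩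
  loopless := ⟨by rintro (_ | a) h <;> first | trivial | exact G.loopless.irrefl a h⟩

/-- The wheel `W_n`: the join of a single vertex with the cycle `C_n`. -/
def wheelGraph (n : ℕ) : SimpleGraph (Option (Fin n)) := coneGraph (cycleGraph n)

/-- The fan `F_n`: the join of a single vertex with the path `P_n`. -/
def fanGraph (n : ℕ) : SimpleGraph (Option (Fin n)) := coneGraph (pathGraph n)


/-! If `D` is a connected dominating set of `G` and `Z` a connected zero forcing set of `H`,
then `D ×ˢ Z` is a connected power dominating set of `G □ H`: the domination step monitors
every fibre `V(G) × {z}` with `z ∈ Z`, and each force `z → w` in `H` lifts to the forces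
`(a, z) → (a, w)`, because the remaining neighbours of `(a, z)` lie in already monitored fibres.
In the wheel, the hub and two consecutive rim vertices form a connected zero forcing set (the
rim is then forced around the cycle), which gives the factor `3`. -/

theorem coneGraph_adj_none_some (H : SimpleGraph α) (a : α) : (coneGraph H).Adj none (some a) :=
  trivial

theorem forced_coneGraph {H : SimpleGraph α} {Z : Set α} {v : α} (hv : Forced H Z v) :
    Forced (coneGraph H) (insert none (some '' Z)) (some v) := by
  induction hv with
  | mem hv => exact .mem (Or.inr ⟨_, hv, rfl⟩)
  | @force v w _ hvw _ ihv ihu =>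
    refine .force ihv hvw ?_
    rintro (_ | u) hvu huw
    · exact .mem (Or.inl rfl)
    · exact ihu u hvu (by rintro rfl; exact huw rfl)

theorem isZFS_coneGraph {H : SimpleGraph α} {Z : Set α} (hZ : IsZFS H Z) :
    IsZFS (coneGraph H) (insert none (some '' Z)) := by
  rintro (_ | v)
  · exact .mem (Or.inl rfl)
  · exact forced_coneGraph (hZ v)

theorem isZFS_cycleGraph (m : ℕ) : IsZFS (cycleGraph (m + 2)) {0, 1} := by
  have hpair : ∀ k : Fin (m + 2), Forced (cycleGraph (m + 2)) {0, 1} k ∧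
      Forced (cycleGraph (m + 2)) {0, 1} (k + 1) := by
    refine Fin.induction ⟨.mem (Or.inl rfl), .mem (Or.inr (by simp))⟩ fun k ih => ?_
    rw [← Fin.coeSucc_eq_succ]
    refine ⟨ih.2, .force ih.2 (by simp [cycleGraph_adj]) fun u hu hne => ?_⟩
    rw [← mem_neighborSet, cycleGraph_neighborSet] at hu
    rcases hu with rfl | rfl
    · simpa only [add_sub_cancel_right] using ih.1
    · exact absurd rfl hne
  exact fun v => (hpair v).1

theorem isCZFS_wheelGraph (m : ℕ) :
    IsCZFS (wheelGraph (m + 2)) ({none, some 0, some 1} : Finset (Option (Fin (m + 2)))) := by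
  have hset : (({none, some 0, some 1} : Finset (Option (Fin (m + 2)))) : Set _) =
      ({none, some 0} ∪ {none, some 1} : Set (Option (Fin (m + 2)))) := by
    ext
    simp only [Finset.coe_insert, Finset.coe_singleton, Set.mem_insert_iff,
      Set.mem_singleton_iff, Set.mem_union]
    tauto
  refine ⟨?_, ?_⟩
  · simpa [wheelGraph, Set.image_insert_eq] using isZFS_coneGraph (isZFS_cycleGraph m)
  · rw [hset]
    exact induce_union_connected
      (induce_pair_connected_of_adj (coneGraph_adj_none_some _ _)).preconnected
      (induce_pair_connected_of_adj (coneGraph_adj_none_some _ _)).preconnected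
      ⟨none, by simp⟩

namespace SimpleGraph

variable {G : SimpleGraph α} {H : SimpleGraph β}

def induceProdIso (G : SimpleGraph α) (H : SimpleGraph β) (s : Set α) (t : Set β) :
    (G □ H).induce (s ×ˢ t) ≃g G.induce s □ H.induce t where
  toEquiv := Equiv.Set.prod s t
  map_rel_iff' := by
    intro x y
    exact or_congr (and_congr Iff.rfl Subtype.ext_iff) (and_congr Iff.rfl Subtype.ext_iff)

theorem Connected.induce_prod {s : Set α} {t : Set β} (hs : (G.induce s).Connected)
    (ht : (H.induce t).Connected) : ((G □ H).induce (s ×ˢ t)).Connected :=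
  (induceProdIso G H s t).symm.connected_iff.mp (hs.boxProd ht)

end SimpleGraph

section

variable {G : SimpleGraph α} {H : SimpleGraph β}

theorem monitored_boxProd_of_forced {D : Set α} {Z : Set β} (hD : IsDomSet G D) {v : β}
    (hv : Forced H Z v) (a : α) :
    Monitored (G □ H) (D ×ˢ Z) (a, v) := by
  induction hv generalizing a with
  | mem hv =>
    obtain ⟨u, hu, rfl | hua⟩ := hD a
    · exact .mem ⟨hu, hv⟩
    · exact .dom ⟨hu, hv⟩ (boxProd_adj_left.mpr hua)
  | @force v w _ hvw _ ihv ihu =>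
    refine .prop (ihv a) (boxProd_adj_right.mpr hvw) ?_
    rintro ⟨b, u⟩ (⟨-, rfl⟩ | ⟨hvu, rfl⟩) hne
    · exact ihv b
    · exact ihu u hvu (by rintro rfl; exact hne rfl) _

theorem isCPDS_boxProd {D : Set α} {Z : Set β} (hD : IsCDS G D)
    (hZ : IsCZFS H Z) : IsCPDS (G □ H) (D ×ˢ Z) :=
  ⟨fun x => monitored_boxProd_of_forced hD.1 (hZ.1 x.2) x.1, hD.2.induce_prod hZ.2⟩

theorem exists_isCDS_card_eq_cdomNum [Fintype α] (hG : G.Connected) :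
    ∃ D : Finset α, D.card = cdomNum G ∧ IsCDS G D := by
  have hne : {k | ∃ D : Finset α, D.card = k ∧ IsCDS G D}.Nonempty := by
    refine ⟨_, Finset.univ, rfl, fun v => ⟨v, by simp, Or.inl rfl⟩, ?_⟩
    rwa [Finset.coe_univ, (induceUnivIso G).connected_iff]
  exact Nat.sInf_mem hne

theorem cpdn_boxProd_le [Fintype α] (hG : G.Connected) {Z : Finset β} (hZ : IsCZFS H Z) :
    cpdn (G □ H) ≤ cdomNum G * Z.card := by
  obtain ⟨D, hDcard, hD⟩ := exists_isCDS_card_eq_cdomNum hG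
  refine hDcard ▸ Finset.card_product D Z ▸ Nat.sInf_le ⟨D ×ˢ Z, rfl, ?_⟩
  simpa using isCPDS_boxProd hD hZ

end

theorem stmt_7_general {α : Type*} [Fintype α]
    (G : SimpleGraph α) (hG : G.Connected)
    (n : ℕ) (hn : 4 ≤ n) :
    cpdn (G □ wheelGraph n) ≤ 3 * cdomNum G := by
  obtain ⟨m, rfl⟩ : ∃ m, n = m + 2 := ⟨n - 2, by omega⟩
  calc cpdn (G □ wheelGraph (m + 2))
      ≤ cdomNum G * ({none, some 0, some 1} : Finset _).card :=
        cpdn_boxProd_le hG (isCZFS_wheelGraph m)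
    _ ≤ 3 * cdomNum G := by
        rw [mul_comm]
        exact Nat.mul_le_mul_right _ Finset.card_le_three

/-- `γ_{P,c}(G □ W_n) ≤ 3·γ_c(G)`. -/
theorem stmt_7 {α : Type*} [Fintype α]
    (G : SimpleGraph α) (hG : G.Connected)
    (hGcard : 3 ≤ Fintype.card α)
    (n : ℕ) (hn : 4 ≤ n) :
    cpdn (G □ wheelGraph n) ≤ 3 * cdomNum G :=
  stmt_7_general G hG n hn
end

section
/- Let t ≥ 3 and k ≥ 3 be integers, let 1 ≤ n_1 ≤ n_2 ≤ … ≤ n_t and 1 ≤ m_1 ≤ m_2 ≤ … ≤ m_k, and consider the complete multipartite graphs K_{n_1,…,n_t} and K_{m_1,…,m_k}. Then γ_{P,c}(K_{n_1,…,n_t} × K_{m_1,…,m_k}) = 2 if n_1 = n_2 = 1 and m_1 = m_2 = 1, and γ_{P,c}(K_{n_1,…,n_t} × K_{m_1,…,m_k}) = 3 otherwise. -/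
open SimpleGraph

variable {V : Type*} {α β : Type*}

/-!
The lower bounds come from forts: a set `F` such that every vertex outside `F` with a neighbour
in `F` has at least two; a fort disjoint from `N[S]` is never monitored from `S`. In
`K_X × K_Y` adjacency only depends on the pair of parts, so a vertex `x` lies in the *cell*
`(part of x.1, part of x.2)` and two vertices are adjacent iff their cells differ in both
coordinates. A cell with two vertices is a fort (its vertices are twins), and so is the set of
vertices `≠ s` sharing a part with `s`. The latter rules out a single vertex; a connected pair
`u ~ v` misses the cells `(u₁, v₂)` and `(v₁, u₂)`, one of which has two vertices unless both
factors have two singleton parts. Conversely three vertices in cells `(aᵣ, bᵣ)` with distinct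
`aᵣ` and distinct `bᵣ` dominate, and in the singleton case the two vertices in cells `(a₀, b₀)`,
`(a₁, b₁)` dominate everything but the cells `(a₀, b₁)`, `(a₁, b₀)`, which are then forced.
-/

section PowerDomination

variable {G : SimpleGraph V}

def IsFort (G : SimpleGraph V) (F : Set V) : Prop :=
  ∀ v ∉ F, ∀ w ∈ F, G.Adj v w → ∃ u ∈ F, u ≠ w ∧ G.Adj v u

theorem IsFort.not_monitored {F S : Set V} (hF : IsFort G F)
    (hS : ∀ s ∈ S, s ∉ F ∧ ∀ w, G.Adj s w → w ∉ F) {v : V} (hv : Monitored G S v) : v ∉ F := by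
  induction hv with
  | mem hs => exact (hS _ hs).1
  | dom hs hadj => exact (hS _ hs).2 _ hadj
  | prop _ hadj _ ihv ihall =>
    intro hw
    obtain ⟨u, huF, huw, hvu⟩ := hF _ ihv _ hw hadj
    exact ihall u hvu huw huF

theorem IsFort.not_isPDS {F S : Set V} (hF : IsFort G F) (hne : F.Nonempty)
    (hS : ∀ s ∈ S, s ∉ F ∧ ∀ w, G.Adj s w → w ∉ F) : ¬ IsPDS G S :=
  fun hpds => hne.elim fun v hv => hF.not_monitored hS (hpds v) hv

theorem isFort_of_twins {F : Set V} (hF : F.Nontrivial)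
    (htwin : ∀ v, ∀ w ∈ F, ∀ u ∈ F, G.Adj v w → G.Adj v u) : IsFort G F := by
  intro v _ w hw hvw
  obtain ⟨u, hu, huw⟩ := hF.exists_ne w
  exact ⟨u, hu, huw, htwin v w hw u hu hvw⟩

theorem Monitored.of_forall_ne {S : Set V} {v w : V} (hvw : G.Adj v w)
    (h : ∀ u, u ≠ w → Monitored G S u) : Monitored G S w :=
  Monitored.prop (h v hvw.ne) hvw fun u _ huw => h u huw

theorem IsCDS.isCPDS {S : Set V} (hS : IsCDS G S) : IsCPDS G S := by
  refine ⟨fun v => ?_, hS.2⟩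
  obtain ⟨u, hu, rfl | huv⟩ := hS.1 v
  exacts [Monitored.mem hu, Monitored.dom hu huv]

theorem cpdn_eq {N : ℕ} (hex : ∃ S : Finset V, S.card = N ∧ IsCPDS G S)
    (hmin : ∀ S : Finset V, IsCPDS G S → N ≤ S.card) : cpdn G = N :=
  IsLeast.csInf_eq ⟨hex, by rintro _ ⟨S, rfl, hS⟩; exact hmin S hS⟩

theorem adj_of_induce_pair_connected {u v : V} (huv : u ≠ v)
    (h : (G.induce {u, v}).Connected) : G.Adj u v := by
  obtain ⟨p⟩ := h.preconnected ⟨u, by simp⟩ ⟨v, by simp⟩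
  cases p with
  | nil => exact absurd rfl huv
  | @cons _ x _ hux _ =>
    obtain ⟨x, rfl | rfl⟩ := x
    · exact (hux.ne rfl).elim
    · exact hux

theorem induce_triple_connected_of_adj {x y z : V} (hxy : G.Adj x y) (hxz : G.Adj x z) :
    (G.induce {x, y, z}).Connected := by
  have hunion : ({x, y, z} : Set V) = {x, y} ∪ {x, z} := by
    ext; simp only [Set.mem_insert_iff, Set.mem_singleton_iff, Set.mem_union]; tauto
  rw [hunion]
  exact induce_union_connected (induce_pair_connected_of_adj hxy).preconnected
    (induce_pair_connected_of_adj hxz).preconnected ⟨x, by simp⟩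

end PowerDomination

theorem exists_three_ne_of_three_le_card {α : Type*} (h : 3 ≤ ENat.card α) :
    ∃ a₀ a₁ a₂ : α, a₀ ≠ a₁ ∧ a₀ ≠ a₂ ∧ a₁ ≠ a₂ := by
  obtain ⟨a₀⟩ := (ENat.card_ne_zero_iff_nonempty α).mp (lt_of_lt_of_le (by norm_num) h).ne'
  obtain ⟨a₁, h₁, -⟩ := ENat.exists_ne_ne_of_three_le h a₀ a₀
  obtain ⟨a₂, h₂₀, h₂₁⟩ := ENat.exists_ne_ne_of_three_le h a₀ a₁
  exact ⟨a₀, a₁, a₂, h₁.symm, h₂₀.symm, h₂₁.symm⟩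

theorem Monotone.nontrivial_fin_or {t : ℕ} {n : Fin t → ℕ} (hn : Monotone n) (ht : 1 < t)
    (h₁ : 2 ≤ n ⟨1, ht⟩) {i i' : Fin t} (hii' : i ≠ i') :
    Nontrivial (Fin (n i)) ∨ Nontrivial (Fin (n i')) := by
  simp only [Fin.nontrivial_iff_two_le]
  rcases lt_or_gt_of_ne hii' with hlt | hlt
  · exact Or.inr (h₁.trans (hn (by simp only [Fin.le_def, Fin.lt_def] at hlt ⊢; omega)))
  · exact Or.inl (h₁.trans (hn (by simp only [Fin.le_def, Fin.lt_def] at hlt ⊢; omega)))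

section TensorCompleteMultipartite

variable {ι κ : Type*} {X : ι → Type*} {Y : κ → Type*}

local notation "W" => (Σ i, X i) × (Σ j, Y j)

local notation "T" => tensorProd (completeMultipartiteGraph X) (completeMultipartiteGraph Y)

def cell (i : ι) (j : κ) : Set W := {x | x.1.1 = i ∧ x.2.1 = j}

theorem isFort_cell {i : ι} {j : κ} (h : (cell i j : Set W).Nontrivial) : IsFort T (cell i j) :=
  isFort_of_twins h fun _ _ ⟨hw₁, hw₂⟩ _ ⟨hu₁, hu₂⟩ ⟨hvw₁, hvw₂⟩ =>
    ⟨fun h => hvw₁ (h.trans (hu₁.trans hw₁.symm)), fun h => hvw₂ (h.trans (hu₂.trans hw₂.symm))⟩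

theorem cell_subsingleton (i : ι) (j : κ) [Subsingleton (X i)] [Subsingleton (Y j)] :
    (cell i j : Set W).Subsingleton := by
  rintro ⟨⟨_, a⟩, ⟨_, b⟩⟩ ⟨rfl, rfl⟩ ⟨⟨_, a'⟩, ⟨_, b'⟩⟩ ⟨h₁, h₂⟩
  dsimp only at h₁ h₂
  subst h₁ h₂
  rw [Subsingleton.elim a a', Subsingleton.elim b b']

variable [∀ i, Nonempty (X i)] [∀ j, Nonempty (Y j)]

noncomputable def cellVertex (i : ι) (j : κ) : W :=
  (⟨i, Classical.arbitrary _⟩, ⟨j, Classical.arbitrary _⟩)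

theorem cell_nontrivial {i : ι} {j : κ} (h : Nontrivial (X i) ∨ Nontrivial (Y j)) :
    (cell i j : Set W).Nontrivial := by
  rcases h with h | h
  · obtain ⟨a, a', haa'⟩ := exists_pair_ne (X i)
    obtain ⟨b⟩ : Nonempty (Y j) := inferInstance
    exact ⟨(⟨i, a⟩, ⟨j, b⟩), ⟨rfl, rfl⟩, (⟨i, a'⟩, ⟨j, b⟩), ⟨rfl, rfl⟩, by simp [haa']⟩
  · obtain ⟨b, b', hbb'⟩ := exists_pair_ne (Y j)
    obtain ⟨a⟩ : Nonempty (X i) := inferInstance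
    exact ⟨(⟨i, a⟩, ⟨j, b⟩), ⟨rfl, rfl⟩, (⟨i, a⟩, ⟨j, b'⟩), ⟨rfl, rfl⟩, by simp [hbb']⟩

theorem not_isPDS_pair {u v : W} (huv : (T).Adj u v)
    (h : Nontrivial (X u.1.1) ∨ Nontrivial (Y v.2.1)) : ¬ IsPDS T {u, v} := by
  refine (isFort_cell (cell_nontrivial h)).not_isPDS (cell_nontrivial h).nonempty ?_
  rintro s (rfl | rfl)
  · exact ⟨fun hs => huv.2 hs.2, fun w hw hwF => hw.1 hwF.1.symm⟩
  · exact ⟨fun hs => huv.1 hs.1.symm, fun w hw hwF => hw.2 hwF.2.symm⟩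

theorem isFort_cross (hι : 3 ≤ ENat.card ι) (hκ : 3 ≤ ENat.card κ) (s : W) :
    IsFort T {x | x ≠ s ∧ (x.1.1 = s.1.1 ∨ x.2.1 = s.2.1)} := by
  rintro v hv w ⟨-, hw⟩ ⟨hvw₁, hvw₂⟩
  have hvs : v.1.1 ≠ s.1.1 ∧ v.2.1 ≠ s.2.1 := by
    rw [← not_or]
    refine fun hvs => hv ⟨?_, hvs⟩
    rintro rfl
    rcases hw with h | h
    exacts [hvw₁ h.symm, hvw₂ h.symm]
  rcases hw with hw | hw
  · obtain ⟨c, hcv, hcs⟩ := ENat.exists_ne_ne_of_three_le hι v.1.1 s.1.1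
    refine ⟨cellVertex c s.2.1, ⟨fun h => hcs congr($h.1.1), Or.inr rfl⟩,
      fun h => hcs (congr($h.1.1).trans hw), hcv.symm, hvs.2⟩
  · obtain ⟨c, hcv, hcs⟩ := ENat.exists_ne_ne_of_three_le hκ v.2.1 s.2.1
    refine ⟨cellVertex s.1.1 c, ⟨fun h => hcs congr($h.2.1), Or.inl rfl⟩,
      fun h => hcs (congr($h.2.1).trans hw), hvs.1, hcv.symm⟩

theorem not_isPDS_singleton (hι : 3 ≤ ENat.card ι) (hκ : 3 ≤ ENat.card κ) (s : W) :
    ¬ IsPDS T {s} := by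
  obtain ⟨c, hcs, -⟩ := ENat.exists_ne_ne_of_three_le hκ s.2.1 s.2.1
  refine (isFort_cross hι hκ s).not_isPDS
    ⟨cellVertex s.1.1 c, fun h => hcs congr($h.2.1), Or.inl rfl⟩ ?_
  rintro _ rfl
  exact ⟨fun h => h.1 rfl, fun w ⟨h₁, h₂⟩ hw => hw.2.elim (h₁ ·.symm) (h₂ ·.symm)⟩

theorem two_le_card_of_isCPDS (hι : 3 ≤ ENat.card ι) (hκ : 3 ≤ ENat.card κ) {S : Finset W}
    (hS : IsCPDS T S) : 2 ≤ S.card := by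
  obtain ⟨hpds, hconn⟩ := hS
  have hne : S.Nonempty := Finset.coe_nonempty.mp (Set.nonempty_coe_sort.mp hconn.nonempty)
  by_contra! h
  obtain ⟨s, rfl⟩ := Finset.card_eq_one.mp (show S.card = 1 by have := hne.card_pos; omega)
  exact not_isPDS_singleton hι hκ s (by simpa using hpds)

theorem three_le_card_of_isCPDS (hι : 3 ≤ ENat.card ι) (hκ : 3 ≤ ENat.card κ)
    (h : (∀ i i', i ≠ i' → Nontrivial (X i) ∨ Nontrivial (X i')) ∨
      ∀ j j', j ≠ j' → Nontrivial (Y j) ∨ Nontrivial (Y j'))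
    {S : Finset W} (hS : IsCPDS T S) : 3 ≤ S.card := by
  classical
  have h₂ := two_le_card_of_isCPDS hι hκ hS
  by_contra! h₃
  obtain ⟨u, v, huv, rfl⟩ := Finset.card_eq_two.mp (show S.card = 2 by omega)
  obtain ⟨hpds, hconn⟩ := hS
  rw [Finset.coe_pair] at hpds hconn
  have hadj := adj_of_induce_pair_connected huv hconn
  rcases h with hX | hY
  · rcases hX _ _ hadj.1 with h | h
    · exact not_isPDS_pair hadj (Or.inl h) hpds
    · exact not_isPDS_pair hadj.symm (Or.inl h) (Set.pair_comm u v ▸ hpds)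
  · rcases hY _ _ hadj.2 with h | h
    · exact not_isPDS_pair hadj.symm (Or.inr h) (Set.pair_comm u v ▸ hpds)
    · exact not_isPDS_pair hadj (Or.inr h) hpds

theorem exists_isCPDS_card_three (hι : 3 ≤ ENat.card ι) (hκ : 3 ≤ ENat.card κ) :
    ∃ S : Finset W, S.card = 3 ∧ IsCPDS T S := by
  classical
  obtain ⟨a₀, a₁, a₂, ha₀₁, ha₀₂, ha₁₂⟩ := exists_three_ne_of_three_le_card hι
  obtain ⟨b₀, b₁, b₂, hb₀₁, hb₀₂, hb₁₂⟩ := exists_three_ne_of_three_le_card hκ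
  have hxy : (T).Adj (cellVertex a₀ b₀) (cellVertex a₁ b₁) := ⟨ha₀₁, hb₀₁⟩
  have hxz : (T).Adj (cellVertex a₀ b₀) (cellVertex a₂ b₂) := ⟨ha₀₂, hb₀₂⟩
  have hyz : (T).Adj (cellVertex a₁ b₁) (cellVertex a₂ b₂) := ⟨ha₁₂, hb₁₂⟩
  refine ⟨_, Finset.card_eq_three.mpr ⟨_, _, _, hxy.ne, hxz.ne, hyz.ne, rfl⟩,
    IsCDS.isCPDS ⟨fun v => ?_, ?_⟩⟩
  · -- `v.1.1` equals at most one of the `aᵣ`, and `v.2.1` at most one of the `bᵣ`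
    by_cases h₀ : a₀ ≠ v.1.1 ∧ b₀ ≠ v.2.1
    · exact ⟨cellVertex a₀ b₀, by simp, Or.inr h₀⟩
    by_cases h₁ : a₁ ≠ v.1.1 ∧ b₁ ≠ v.2.1
    · exact ⟨cellVertex a₁ b₁, by simp, Or.inr h₁⟩
    exact ⟨cellVertex a₂ b₂, by simp, Or.inr (show a₂ ≠ v.1.1 ∧ b₂ ≠ v.2.1 by grind)⟩
  · rw [Finset.coe_insert, Finset.coe_pair]
    exact induce_triple_connected_of_adj hxy hxz

theorem exists_isCPDS_card_two (hι : 3 ≤ ENat.card ι) {a₀ a₁ : ι} {b₀ b₁ : κ} (ha : a₀ ≠ a₁)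
    (hb : b₀ ≠ b₁) [Subsingleton (X a₀)] [Subsingleton (X a₁)] [Subsingleton (Y b₀)]
    [Subsingleton (Y b₁)] : ∃ S : Finset W, S.card = 2 ∧ IsCPDS T S := by
  classical
  have hxy : (T).Adj (cellVertex a₀ b₀) (cellVertex a₁ b₁) := ⟨ha, hb⟩
  refine ⟨_, Finset.card_pair hxy.ne, fun v => ?_, by
    rw [Finset.coe_pair]; exact induce_pair_connected_of_adj hxy⟩
  rw [Finset.coe_pair]
  set S : Set W := {cellVertex a₀ b₀, cellVertex a₁ b₁}
  have hdom : ∀ u : W, (u.1.1 ≠ a₀ ∧ u.2.1 ≠ b₀) ∨ (u.1.1 ≠ a₁ ∧ u.2.1 ≠ b₁) →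
      Monitored T S u := by
    rintro u (⟨h₁, h₂⟩ | ⟨h₁, h₂⟩)
    exacts [Monitored.dom (Or.inl rfl) ⟨h₁.symm, h₂.symm⟩,
      Monitored.dom (Or.inr rfl) ⟨h₁.symm, h₂.symm⟩]
  have hrest : ∀ u : W, u ≠ cellVertex a₀ b₁ → u ≠ cellVertex a₁ b₀ → Monitored T S u := by
    intro u hp hq
    have hp' : ¬(u.1.1 = a₀ ∧ u.2.1 = b₁) := fun h => hp (cell_subsingleton a₀ b₁ h ⟨rfl, rfl⟩)
    have hq' : ¬(u.1.1 = a₁ ∧ u.2.1 = b₀) := fun h => hq (cell_subsingleton a₁ b₀ h ⟨rfl, rfl⟩)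
    apply hdom
    grind
  obtain ⟨a₂, ha₂₀, ha₂₁⟩ := ENat.exists_ne_ne_of_three_le hι a₀ a₁
  have hp : Monitored T S (cellVertex a₀ b₁) :=
    Monitored.prop (hdom (cellVertex a₂ b₀) (Or.inr ⟨ha₂₁, hb⟩)) ⟨ha₂₀, hb⟩
      fun u hu hup => hrest u hup fun huq => by subst huq; exact hu.2 rfl
  have hall : ∀ u, u ≠ cellVertex a₁ b₀ → Monitored T S u := fun u hq =>
    if hp' : u = cellVertex a₀ b₁ then hp' ▸ hp else hrest u hp' hq
  by_cases hv : v = cellVertex a₁ b₀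
  · have hpq : (T).Adj (cellVertex a₀ b₁) (cellVertex a₁ b₀) := ⟨ha, hb.symm⟩
    exact hv ▸ Monitored.of_forall_ne hpq hall
  · exact hall v hv

end TensorCompleteMultipartite

/-- `γ_{P,c}(K_{n₁,…,n_t} × K_{m₁,…,m_k})` for complete multipartite graphs with
`t, k ≥ 3` parts. -/
theorem stmt_19 (t k : ℕ) (ht : 3 ≤ t) (hk : 3 ≤ k)
    (n : Fin t → ℕ) (m : Fin k → ℕ)
    (hnmono : Monotone n) (hmmono : Monotone m)
    (hnpos : ∀ i, 1 ≤ n i) (hmpos : ∀ i, 1 ≤ m i) :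
    (n ⟨0, by omega⟩ = 1 ∧ n ⟨1, by omega⟩ = 1 ∧
        m ⟨0, by omega⟩ = 1 ∧ m ⟨1, by omega⟩ = 1 →
      cpdn (tensorProd (completeMultipartiteGraph (fun i => Fin (n i)))
        (completeMultipartiteGraph (fun i => Fin (m i)))) = 2) ∧
    (¬ (n ⟨0, by omega⟩ = 1 ∧ n ⟨1, by omega⟩ = 1 ∧
        m ⟨0, by omega⟩ = 1 ∧ m ⟨1, by omega⟩ = 1) →
      cpdn (tensorProd (completeMultipartiteGraph (fun i => Fin (n i)))
        (completeMultipartiteGraph (fun i => Fin (m i)))) = 3) := by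
  have hι : 3 ≤ ENat.card (Fin t) := by simpa using ht
  have hκ : 3 ≤ ENat.card (Fin k) := by simpa using hk
  have : ∀ i, Nonempty (Fin (n i)) := fun i => Fin.pos_iff_nonempty.mp (hnpos i)
  have : ∀ j, Nonempty (Fin (m j)) := fun j => Fin.pos_iff_nonempty.mp (hmpos j)
  refine ⟨fun ⟨hn₀, hn₁, hm₀, hm₁⟩ => ?_, fun h => ?_⟩
  · have : Subsingleton (Fin (n ⟨0, by omega⟩)) := Fin.subsingleton_iff_le_one.mpr hn₀.le
    have : Subsingleton (Fin (n ⟨1, by omega⟩)) := Fin.subsingleton_iff_le_one.mpr hn₁.le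
    have : Subsingleton (Fin (m ⟨0, by omega⟩)) := Fin.subsingleton_iff_le_one.mpr hm₀.le
    have : Subsingleton (Fin (m ⟨1, by omega⟩)) := Fin.subsingleton_iff_le_one.mpr hm₁.le
    exact cpdn_eq (exists_isCPDS_card_two hι (a₀ := ⟨0, _⟩) (a₁ := ⟨1, _⟩) (b₀ := ⟨0, _⟩)
        (b₁ := ⟨1, _⟩) (by simp) (by simp))
      fun S hS => two_le_card_of_isCPDS hι hκ hS
  · have h₁ : 2 ≤ n ⟨1, by omega⟩ ∨ 2 ≤ m ⟨1, by omega⟩ := by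
      have := hnmono (show (⟨0, by omega⟩ : Fin t) ≤ ⟨1, by omega⟩ by simp [Fin.le_def])
      have := hmmono (show (⟨0, by omega⟩ : Fin k) ≤ ⟨1, by omega⟩ by simp [Fin.le_def])
      have := hnpos ⟨0, by omega⟩
      have := hmpos ⟨0, by omega⟩
      omega
    refine cpdn_eq (exists_isCPDS_card_three hι hκ) fun S hS => three_le_card_of_isCPDS hι hκ ?_ hS
    exact h₁.imp (fun h _ _ => hnmono.nontrivial_fin_or (by omega) h)
      (fun h _ _ => hmmono.nontrivial_fin_or (by omega) h)
end
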